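/- arXiv:1609.04482 — 2 statements merged into one kernel-verified Lean document; each statement's English description precedes it below -/
import Mathlib

section
/- If G is a graph on n vertices without isolated vertices, then γ(G) ≤ m_G[2,n], the number of Laplacian eigenvalues of G in the interval [2,n]. -/
open scoped Classical

/-- The `i`-th Laplacian eigenvalue of `G` (in the unsorted indexing given by
the spectral theorem applied to the Laplacian matrix). -/
noncomputable def lapEig {V : Type*} [Fintype V] [DecidableEq V] (G : SimpleGraph V) : V → ℝ :=
  (G.posSemidef_lapMatrix (R := ℝ)).isHermitian.eigenvalues

/-- The number of Laplacian eigenvalues of `G` (with multiplicity) satisfying `P`. -/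
noncomputable def mCount {V : Type*} [Fintype V] [DecidableEq V] (G : SimpleGraph V)
    (P : ℝ → Prop) : ℕ :=
  (Finset.univ.filter fun i => P (lapEig G i)).card

/-- `S` is a dominating set of `G`. -/
def IsDomSet {V : Type*} (G : SimpleGraph V) (S : Finset V) : Prop :=
  ∀ v ∉ S, ∃ u ∈ S, G.Adj u v

/-- The domination number of `G`. -/
noncomputable def domNum {V : Type*} [Fintype V] (G : SimpleGraph V) : ℕ :=
  sInf {k | ∃ S : Finset V, IsDomSet G S ∧ S.card = k}

/-!
Take a maximum matching. Every unmatched vertex has a neighbour (no isolated vertices), which is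
matched (no augmenting edge); attaching it to a suitable end of that matching edge, chosen using
that there is no augmenting path of length three, splits the vertex set into stars with at least
two vertices each. The centres dominate `G`, so `γ(G)` is at most the number `k` of stars.
Conversely, giving the centre of each star a free value `t` and its leaves the value `-t` yields a
`k`-dimensional space of vectors in which every vertex has a neighbour of opposite value, so
`xᵀ L x ≥ 2 ‖x‖²` there; by the min-max principle `L` has at least `k` eigenvalues `≥ 2`, and all
of them are at most `n`.
-/

open Finset Matrix

namespace Matrix.IsHermitian

variable {V : Type*} [Fintype V] [DecidableEq V] {A : Matrix V V ℝ} (hA : A.IsHermitian)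

lemma dotProduct_self_eq_sum_sq_star_eigenvectorUnitary_mulVec (x : V → ℝ) :
    x ⬝ᵥ x = ∑ i, (star (hA.eigenvectorUnitary : Matrix V V ℝ) *ᵥ x) i ^ 2 := by
  set U : Matrix V V ℝ := ↑hA.eigenvectorUnitary
  calc x ⬝ᵥ x = x ⬝ᵥ (U *ᵥ (star U *ᵥ x)) := by
        rw [mulVec_mulVec, mem_unitaryGroup_iff.mp hA.eigenvectorUnitary.2, one_mulVec]
    _ = (star U *ᵥ x) ⬝ᵥ (star U *ᵥ x) := by
        rw [dotProduct_mulVec, ← mulVec_transpose, star_eq_conjTranspose,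
          conjTranspose_eq_transpose_of_trivial]
    _ = _ := by simp only [dotProduct, sq]

lemma dotProduct_mulVec_eq_sum_eigenvalues_mul_sq (x : V → ℝ) :
    x ⬝ᵥ (A *ᵥ x) =
      ∑ i, hA.eigenvalues i * (star (hA.eigenvectorUnitary : Matrix V V ℝ) *ᵥ x) i ^ 2 := by
  set U : Matrix V V ℝ := ↑hA.eigenvectorUnitary
  conv_lhs => rw [hA.spectral_theorem, Unitary.conjStarAlgAut_apply]
  rw [← mulVec_mulVec, ← mulVec_mulVec, dotProduct_mulVec, ← mulVec_transpose,
    ← conjTranspose_eq_transpose_of_trivial, ← star_eq_conjTranspose]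
  simp only [mulVec_diagonal, dotProduct, Function.comp_apply, RCLike.ofReal_real_eq_id, id]
  exact sum_congr rfl fun i _ => by ring

lemma eigenvalues_le_of_forall_dotProduct_mulVec_le {d : ℝ}
    (hd : ∀ x, x ⬝ᵥ (A *ᵥ x) ≤ d * (x ⬝ᵥ x)) (i : V) : hA.eigenvalues i ≤ d := by
  have h := hd (hA.eigenvectorBasis i)
  rw [hA.dotProduct_mulVec_eq_sum_eigenvalues_mul_sq,
    hA.dotProduct_self_eq_sum_sq_star_eigenvectorUnitary_mulVec, star_eigenvectorUnitary_mulVec]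
    at h
  simpa [Pi.single_apply] using h

theorem finrank_le_card_filter_le_eigenvalues {W : Submodule ℝ (V → ℝ)} {c : ℝ}
    (hW : ∀ x ∈ W, c * (x ⬝ᵥ x) ≤ x ⬝ᵥ (A *ᵥ x)) :
    Module.finrank ℝ W ≤ #{i | c ≤ hA.eigenvalues i} := by
  set S : Finset V := {i | c ≤ hA.eigenvalues i}
  set U : Matrix V V ℝ := ↑hA.eigenvectorUnitary
  by_contra! hlt
  let P : W →ₗ[ℝ] (S → ℝ) :=
    LinearMap.funLeft ℝ ℝ Subtype.val ∘ₗ (mulVecLin (star U)).domRestrict W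
  have hker : LinearMap.ker P ≠ ⊥ :=
    LinearMap.ker_ne_bot_of_finrank_lt (by simpa using hlt)
  obtain ⟨⟨x, hxW⟩, hxP, hx0⟩ := (Submodule.ne_bot_iff _).mp hker
  -- `star U *ᵥ x` lists the coordinates of `x` in the eigenbasis; `x` has none along an
  -- eigenvalue `≥ c`, so its Rayleigh quotient is `< c`.
  have hy0 : ∀ i ∈ S, (star U *ᵥ x) i = 0 := fun i hi => congrFun hxP ⟨i, hi⟩
  obtain ⟨j, hj⟩ : ∃ j, (star U *ᵥ x) j ≠ 0 := by
    by_contra! hy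
    have : x ⬝ᵥ x = 0 := by
      simp [hA.dotProduct_self_eq_sum_sq_star_eigenvectorUnitary_mulVec, U, hy]
    exact hx0 (Subtype.ext (dotProduct_self_eq_zero.mp this))
  have hpos : 0 < ∑ i, (c - hA.eigenvalues i) * (star U *ᵥ x) i ^ 2 := by
    refine sum_pos' (fun i _ => ?_) ⟨j, mem_univ j, ?_⟩
    · by_cases hi : i ∈ S
      · simp [hy0 i hi]
      · have : hA.eigenvalues i < c := by simpa [S] using hi
        exact mul_nonneg (sub_nonneg.2 this.le) (sq_nonneg _)
    · have : hA.eigenvalues j < c := by simpa [S] using fun hjS => hj (hy0 j hjS)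
      exact mul_pos (sub_pos.2 this) (by positivity)
  have := hW x hxW
  rw [hA.dotProduct_mulVec_eq_sum_eigenvalues_mul_sq,
    hA.dotProduct_self_eq_sum_sq_star_eigenvectorUnitary_mulVec, mul_sum] at this
  simp only [sub_mul, sum_sub_distrib] at hpos
  linarith

end Matrix.IsHermitian

namespace SimpleGraph

variable {V : Type*} (G : SimpleGraph V)

section Laplacian

variable [Fintype V] [DecidableEq V]

lemma dotProduct_lapMatrix_mulVec (x : V → ℝ) :
    x ⬝ᵥ (G.lapMatrix ℝ *ᵥ x) = (∑ i, ∑ j, if G.Adj i j then (x i - x j) ^ 2 else 0) / 2 := by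
  rw [← toLinearMap₂'_apply', lapMatrix_toLinearMap₂']

lemma dotProduct_lapMatrix_mulVec_le (x : V → ℝ) :
    x ⬝ᵥ (G.lapMatrix ℝ *ᵥ x) ≤ Fintype.card V * (x ⬝ᵥ x) := by
  have hadj : (∑ i, ∑ j, if G.Adj i j then (x i - x j) ^ 2 else 0) ≤ ∑ i, ∑ j, (x i - x j) ^ 2 :=
    sum_le_sum fun i _ => sum_le_sum fun j _ => by split_ifs <;> [rfl; positivity]
  have hall : ∑ i, ∑ j, (x i - x j) ^ 2 = 2 * Fintype.card V * (x ⬝ᵥ x) - 2 * (∑ i, x i) ^ 2 := by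
    simp only [sub_sq, sum_add_distrib, sum_sub_distrib, sum_const, card_univ, nsmul_eq_mul,
      ← mul_sum, ← sum_mul, dotProduct, ← sq]
    ring
  rw [dotProduct_lapMatrix_mulVec]
  nlinarith [sq_nonneg (∑ i, x i)]

lemma two_mul_dotProduct_self_le_dotProduct_lapMatrix_mulVec {x : V → ℝ}
    (hx : ∀ u, ∃ w, G.Adj u w ∧ x w = -x u) :
    2 * (x ⬝ᵥ x) ≤ x ⬝ᵥ (G.lapMatrix ℝ *ᵥ x) := by
  choose p hadj hp using hx
  have hrow : ∀ u, 4 * x u ^ 2 ≤ ∑ w, if G.Adj u w then (x u - x w) ^ 2 else 0 := fun u => by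
    calc 4 * x u ^ 2 = if G.Adj u (p u) then (x u - x (p u)) ^ 2 else 0 := by
          rw [if_pos (hadj u), hp u]; ring
      _ ≤ _ := single_le_sum (f := fun w => if G.Adj u w then (x u - x w) ^ 2 else 0)
          (fun w _ => by positivity) (mem_univ (p u))
  rw [dotProduct_lapMatrix_mulVec]
  have := sum_le_sum fun u (_ : u ∈ univ) => hrow u
  simp only [← mul_sum, dotProduct, ← sq] at this ⊢
  linarith

lemma lapEig_le_card (i : V) : lapEig G i ≤ Fintype.card V :=
  (G.posSemidef_lapMatrix ℝ).isHermitian.eigenvalues_le_of_forall_dotProduct_mulVec_le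
    G.dotProduct_lapMatrix_mulVec_le i

end Laplacian

/-- `c v` is the centre of the star containing `v`, in a spanning forest of stars with at least
two vertices each. -/
structure IsStarForestCenter (c : V → V) : Prop where
  map_center : ∀ v, c (c v) = c v
  adj : ∀ v, c v ≠ v → G.Adj (c v) v
  exists_leaf : ∀ v, c v = v → ∃ w ≠ v, c w = v

namespace IsStarForestCenter

variable {G} {c : V → V} (hc : G.IsStarForestCenter c)
include hc

lemma isDomSet [Fintype V] [DecidableEq V] : IsDomSet G {v | c v = v} := fun v hv =>
  ⟨c v, by simpa using hc.map_center v, hc.adj v (by simpa using hv)⟩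

lemma domNum_le [Fintype V] [DecidableEq V] : domNum G ≤ #{v | c v = v} :=
  Nat.sInf_le ⟨_, hc.isDomSet, rfl⟩

lemma exists_adj_eq_neg {x : V → ℝ} (hx : ∀ v, c v ≠ v → x v = -x (c v)) (u : V) :
    ∃ w, G.Adj u w ∧ x w = -x u := by
  by_cases hu : c u = u
  · obtain ⟨w, hwu, hcw⟩ := hc.exists_leaf u hu
    have hw : c w ≠ w := hcw ▸ hwu.symm
    exact ⟨w, hcw ▸ hc.adj w hw, hcw ▸ hx w hw⟩
  · exact ⟨c u, (hc.adj u hu).symm, by rw [hx u hu, neg_neg]⟩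

lemma card_centers_le_card_two_le_lapEig [Fintype V] [DecidableEq V] :
    #{v | c v = v} ≤ #{i | 2 ≤ lapEig G i} := by
  let σ : V → ℝ := fun v => if c v = v then 1 else -1
  let T : ({s // c s = s} → ℝ) →ₗ[ℝ] V → ℝ :=
    LinearMap.mulLeft ℝ σ ∘ₗ LinearMap.funLeft ℝ ℝ fun v => ⟨c v, hc.map_center v⟩
  have hT : Function.Injective T := by
    rw [← LinearMap.ker_eq_bot, LinearMap.ker_eq_bot']
    intro t ht
    funext s
    simpa [T, σ, s.2] using congrFun ht s
  have hW : ∀ x ∈ LinearMap.range T, 2 * (x ⬝ᵥ x) ≤ x ⬝ᵥ (G.lapMatrix ℝ *ᵥ x) := by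
    rintro _ ⟨t, rfl⟩
    refine G.two_mul_dotProduct_self_le_dotProduct_lapMatrix_mulVec
      (hc.exists_adj_eq_neg fun v hv => ?_)
    simp [T, σ, hv, hc.map_center v]
  have := (G.posSemidef_lapMatrix ℝ).isHermitian.finrank_le_card_filter_le_eigenvalues hW
  rwa [LinearMap.finrank_range_of_inj hT, Module.finrank_fintype_fun_eq_card,
    Fintype.card_subtype] at this

end IsStarForestCenter

/-- A matching of `G`, encoded by the involution exchanging the two ends of each matching edge
and fixing the unmatched vertices. -/
structure IsMatchingInvolution (m : V → V) : Prop where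
  involutive : Function.Involutive m
  adj : ∀ v, m v ≠ v → G.Adj v (m v)

def IsMaximumMatchingInvolution (m : V → V) : Prop :=
  G.IsMatchingInvolution m ∧
    ∀ m', G.IsMatchingInvolution m' → {v | m' v ≠ v}.ncard ≤ {v | m v ≠ v}.ncard

lemma exists_isMaximumMatchingInvolution [Finite V] : ∃ m, G.IsMaximumMatchingInvolution m := by
  have : Nonempty {m // G.IsMatchingInvolution m} :=
    ⟨id, fun _ => rfl, fun _ h => absurd rfl h⟩
  obtain ⟨⟨m, hm⟩, hmax⟩ :=
    Finite.exists_max fun m : {m // G.IsMatchingInvolution m} => {v | m.1 v ≠ v}.ncard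
  exact ⟨m, hm, fun m' hm' => hmax ⟨m', hm'⟩⟩

namespace IsMaximumMatchingInvolution

variable {G} [Finite V] {m : V → V} (hm : G.IsMaximumMatchingInvolution m)
include hm

lemma not_ssubset {m' : V → V} (hm' : G.IsMatchingInvolution m') :
    ¬{v | m v ≠ v} ⊂ {v | m' v ≠ v} :=
  fun h => (hm.2 m' hm').not_gt (Set.ncard_lt_ncard h)

lemma not_adj {u v : V} (hu : m u = u) (hv : m v = v) : ¬G.Adj u v := by
  intro huv
  have hmm : ∀ x, m (m x) = x := hm.1.involutive
  have hadj := hm.1.adj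
  let m' x := if x = u then v else if x = v then u else m x
  refine hm.not_ssubset (m' := m') ⟨fun x => ?_, fun x hx => ?_⟩
    ((Set.ssubset_iff_of_subset fun x hx => ?_).2 ⟨u, ?_, ?_⟩)
  all_goals simp only [m', Set.mem_ofPred_eq, ne_eq] at *
  all_goals grind [Adj.symm, Adj.ne]

lemma eq_of_adj_of_adj {a y v : V} (ha : m a ≠ a) (hy : m y = y) (hv : m v = v)
    (hay : G.Adj a y) (hv' : G.Adj (m a) v) : y = v := by
  by_contra hyv
  have hmm : ∀ x, m (m x) = x := hm.1.involutive
  have hadj := hm.1.adj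
  let m' x := if x = a then y else if x = y then a else if x = m a then v else
    if x = v then m a else m x
  refine hm.not_ssubset (m' := m') ⟨fun x => ?_, fun x hx => ?_⟩
    ((Set.ssubset_iff_of_subset fun x hx => ?_).2 ⟨y, ?_, ?_⟩)
  all_goals simp only [m', Set.mem_ofPred_eq, ne_eq] at *
  all_goals grind [Adj.symm, Adj.ne]

end IsMaximumMatchingInvolution

section Hub

variable [LinearOrder V] {m : V → V}

/-- The end of the matching edge `{a, m a}` that becomes the centre of its star. -/
noncomputable def matchingHub (m : V → V) (a : V) : V :=
  if ∃ z, m z = z ∧ G.Adj (min a (m a)) z then min a (m a) else m (min a (m a))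

lemma matchingHub_eq_or (hm : Function.Involutive m) (a : V) :
    G.matchingHub m a = a ∨ G.matchingHub m a = m a := by
  unfold matchingHub
  rcases min_choice a (m a) with h | h <;> rw [h] <;> split_ifs <;> simp [hm a]

lemma matchingHub_apply (hm : Function.Involutive m) (a : V) :
    G.matchingHub m (m a) = G.matchingHub m a := by
  simp only [matchingHub, hm a, min_comm]

lemma matchingHub_matchingHub (hm : Function.Involutive m) (a : V) :
    G.matchingHub m (G.matchingHub m a) = G.matchingHub m a := by
  rcases G.matchingHub_eq_or hm a with h | h <;> rw [h]
  · exact h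
  · rw [G.matchingHub_apply hm, h]

lemma exists_adj_matchingHub (hm : Function.Involutive m) {a z : V} (hz : m z = z)
    (haz : G.Adj a z) :
    ∃ z, m z = z ∧ G.Adj (G.matchingHub m a) z := by
  unfold matchingHub
  split_ifs with h
  · exact h
  · rcases min_choice a (m a) with h' | h' <;> rw [h'] at h ⊢
    · exact absurd ⟨z, hz, haz⟩ h
    · exact ⟨z, hz, by rwa [hm a]⟩

lemma apply_matchingHub_ne (hm : Function.Involutive m) {a : V} (ha : m a ≠ a) :
    m (G.matchingHub m a) ≠ G.matchingHub m a := by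
  rcases G.matchingHub_eq_or hm a with h | h <;> rw [h]
  · exact ha
  · rw [hm a]; exact ha.symm

end Hub

theorem exists_isStarForestCenter [Finite V] (h : ∀ v, ∃ u, G.Adj u v) :
    ∃ c, G.IsStarForestCenter c := by
  -- any linear order, for `matchingHub` to choose an end of each matching edge
  obtain ⟨_, -⟩ := exists_wellFoundedLT V
  obtain ⟨m, hm⟩ := G.exists_isMaximumMatchingInvolution
  have hinv := hm.1.involutive
  have key : ∀ v, ∃ a, m a ≠ a ∧ (m v ≠ v → a = v) ∧
      (m v = v → G.Adj (G.matchingHub m a) v) := by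
    intro v
    by_cases hv : m v = v
    · obtain ⟨u, huv⟩ := h v
      have hu : m u ≠ u := fun hu => hm.not_adj hu hv huv
      refine ⟨u, hu, fun h => absurd hv h, fun _ => ?_⟩
      obtain ⟨z, hz, hhz⟩ := G.exists_adj_matchingHub hinv hv huv
      -- if the hub is `m u`, its free neighbour `z` is `v`: else `v - u = m u - z` augments `m`
      rcases G.matchingHub_eq_or hinv u with he | he <;> rw [he] at hhz ⊢
      · exact huv
      · rwa [hm.eq_of_adj_of_adj hu hv hz huv hhz]
    · exact ⟨v, hv, fun _ => rfl, fun h => absurd h hv⟩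
  choose a ha_matched ha_self ha_adj using key
  have hc_matched v : m (G.matchingHub m (a v)) ≠ G.matchingHub m (a v) :=
    G.apply_matchingHub_ne hinv (ha_matched v)
  refine ⟨fun v => G.matchingHub m (a v), fun v => ?_, fun v hv => ?_, fun v hv => ?_⟩
  · simp only [ha_self _ (hc_matched v), G.matchingHub_matchingHub hinv]
  · by_cases hvm : m v = v
    · exact ha_adj v hvm
    · simp only [ha_self v hvm] at hv ⊢
      rcases G.matchingHub_eq_or hinv v with he | he
      · exact absurd he hv
      · rw [he]; exact (hm.1.adj v hvm).symm
  · have hvm : m v ≠ v := hv ▸ hc_matched v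
    simp only [ha_self v hvm] at hv ⊢
    refine ⟨m v, hvm, ?_⟩
    rw [ha_self (m v) (by rw [hinv v]; exact hvm.symm), G.matchingHub_apply hinv, hv]

end SimpleGraph

/-- Theorem 2: if $G$ is isolate-free then $\gamma(G) \le m_G[2,n]$. -/
theorem domNum_le_mCount_Icc_two_n {n : ℕ} (G : SimpleGraph (Fin n))
    (h : ∀ v, ∃ u, G.Adj u v) :
    domNum G ≤ mCount G (fun x => 2 ≤ x ∧ x ≤ (n : ℝ)) := by
  obtain ⟨c, hc⟩ := G.exists_isStarForestCenter h
  calc domNum G ≤ #{v | c v = v} := hc.domNum_le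
    _ ≤ #{i | 2 ≤ lapEig G i} := hc.card_centers_le_card_two_le_lapEig
    _ = mCount G (fun x => 2 ≤ x ∧ x ≤ (n : ℝ)) := by
      unfold mCount
      congr 1
      ext i
      simpa using fun _ => G.lapEig_le_card i
end

section
/- For any graph G, ε(G) ≤ m_G[1,n], where ε(G) is the maximum number of pendant edges in a spanning forest of G. -/
open scoped Classical

/-- The number of pendant edges of a graph $F$ (edges incident to a degree-one vertex). -/
noncomputable def pendantCount {V : Type*} [Fintype V] [DecidableEq V]
    (F : SimpleGraph V) : ℕ :=
  (F.edgeFinset.filter fun e => ∃ v ∈ e, F.degree v = 1).card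

/-- $\varepsilon(G)$: the maximum number of pendant edges in a spanning forest of $G$. -/
noncomputable def eps {V : Type*} [Fintype V] [DecidableEq V] (G : SimpleGraph V) : ℕ :=
  sSup {k | ∃ F : SimpleGraph V, F ≤ G ∧ F.IsAcyclic ∧ pendantCount F = k}



open Finset Matrix in
lemma edge_eq_of_degree_one {V : Type*} [Fintype V] [DecidableEq V] {F : SimpleGraph V} {v : V}
    (hd : F.degree v = 1) {e e' : Sym2 V} (he : e ∈ F.edgeFinset) (hve : v ∈ e)
    (he' : e' ∈ F.edgeFinset) (hve' : v ∈ e') : e = e' := by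
  have h1 : e ∈ F.incidenceFinset v := by
    rw [SimpleGraph.mem_incidenceFinset]
    exact ⟨SimpleGraph.mem_edgeFinset.mp he, hve⟩
  have h2 : e' ∈ F.incidenceFinset v := by
    rw [SimpleGraph.mem_incidenceFinset]
    exact ⟨SimpleGraph.mem_edgeFinset.mp he', hve'⟩
  have hcard : (F.incidenceFinset v).card ≤ 1 := by
    rw [F.card_incidenceFinset_eq_degree v, hd]
  exact Finset.card_le_one.mp hcard e h1 e' h2

open Finset Matrix in
lemma card_le_card_one_le_eigen {V : Type*} [Fintype V] [DecidableEq V]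
    (A : Matrix V V ℝ) (hA : A.IsHermitian) (S : Finset V)
    (hS : ∀ y : V → ℝ, (∀ v ∉ S, y v = 0) → y ⬝ᵥ y ≤ y ⬝ᵥ (A *ᵥ y)) :
    S.card ≤ (Finset.univ.filter fun i => 1 ≤ hA.eigenvalues i).card := by
  set T := (Finset.univ.filter fun i => 1 ≤ hA.eigenvalues i) with hT
  by_contra hcon
  push_neg at hcon
  set U : Matrix V V ℝ := (hA.eigenvectorUnitary : Matrix V V ℝ) with hUdef
  have hU1 : star U * U = 1 := Unitary.coe_star_mul_self _
  have hU2 : U * star U = 1 := Unitary.coe_mul_star_self _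
  have hspec : A = U * Matrix.diagonal hA.eigenvalues * star U := by
    simpa using hA.spectral_theorem
  set B : Matrix {i // i ∈ T} {v // v ∈ S} ℝ := fun i v => (star U) i.1 v.1 with hB
  have hnotinj : ¬ Function.Injective B.mulVecLin := by
    intro hinj
    have := LinearMap.finrank_le_finrank_of_injective hinj
    simp only [Module.finrank_fintype_fun_eq_card, Fintype.card_coe] at this
    omega
  rw [← LinearMap.ker_eq_bot] at hnotinj
  obtain ⟨x, hx0, hxne⟩ := (Submodule.ne_bot_iff _).mp hnotinj
  rw [LinearMap.mem_ker] at hx0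
  -- the vector y
  set y : V → ℝ := fun v => if h : v ∈ S then x ⟨v, h⟩ else 0 with hy
  have hyS : ∀ v ∉ S, y v = 0 := fun v hv => by simp [hy, hv]
  have hyne : y ≠ 0 := by
    obtain ⟨s, hs⟩ := Function.ne_iff.mp hxne
    intro h
    apply hs
    have := congrFun h s.1
    simpa [hy, s.2] using this
  set z : V → ℝ := star U *ᵥ y with hz
  have hzT : ∀ i ∈ T, z i = 0 := by
    intro i hi
    have h1 : z i = ∑ v : V, (star U) i v * y v := by
      simp [hz, Matrix.mulVec, dotProduct]
    have h2 : ∑ v : V, (star U) i v * y v = ∑ v ∈ S, (star U) i v * y v :=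
      (Finset.sum_subset (Finset.subset_univ S) (fun v _ hv => by simp [hyS v hv])).symm
    have h3 : ∑ v ∈ S, (star U) i v * y v = ∑ v : {v // v ∈ S}, (star U) i v.1 * y v.1 :=
      (Finset.sum_coe_sort S _).symm
    have h4 : ∀ v : {v // v ∈ S}, y v.1 = x v := fun v => by simp [hy, v.2]
    have h5 := congrFun hx0 ⟨i, hi⟩
    simp only [Matrix.mulVecLin_apply, Matrix.mulVec, dotProduct, hB] at h5
    rw [h1, h2, h3]
    simp_rw [h4]
    exact h5
  -- quadratic form identities
  have hstar : star U = Uᵀ := by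
    rw [Matrix.star_eq_conjTranspose, Matrix.conjTranspose_eq_transpose_of_trivial]
  have hdot : ∀ w : V → ℝ, y ⬝ᵥ (U *ᵥ w) = z ⬝ᵥ w := by
    intro w
    rw [Matrix.dotProduct_mulVec]
    congr 1
    rw [hz, hstar, Matrix.mulVec_transpose]
  have hyy : y ⬝ᵥ y = ∑ i : V, (z i)^2 := by
    have h1 : y ⬝ᵥ y = y ⬝ᵥ ((U * star U) *ᵥ y) := by rw [hU2, Matrix.one_mulVec]
    rw [h1, ← Matrix.mulVec_mulVec, hdot]
    simp [dotProduct, sq, hz]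
  have hAyy : y ⬝ᵥ (A *ᵥ y) = ∑ i : V, hA.eigenvalues i * (z i)^2 := by
    have h1 : A *ᵥ y = U *ᵥ (Matrix.diagonal hA.eigenvalues *ᵥ (star U *ᵥ y)) := by
      conv_lhs => rw [hspec]
      rw [Matrix.mulVec_mulVec, Matrix.mulVec_mulVec, Matrix.mul_assoc]
    rw [h1, ← hz, hdot]
    simp only [dotProduct, Matrix.mulVec_diagonal, sq]
    congr 1; ext i; ring
  have hineq := hS y hyS
  rw [hyy, hAyy] at hineq
  have hsum : 0 ≤ ∑ i : V, (hA.eigenvalues i - 1) * (z i)^2 := by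
    have : ∑ i : V, (hA.eigenvalues i - 1) * (z i)^2
        = (∑ i : V, hA.eigenvalues i * (z i)^2) - ∑ i : V, (z i)^2 := by
      rw [← Finset.sum_sub_distrib]; congr 1; ext i; ring
    rw [this]; linarith
  have hterm : ∀ i ∈ Finset.univ, (hA.eigenvalues i - 1) * (z i)^2 ≤ 0 := by
    intro i _
    by_cases hi : i ∈ T
    · rw [hzT i hi]; simp
    · have : hA.eigenvalues i < 1 := by
        by_contra h'
        exact hi (by simp [hT]; linarith)
      nlinarith [sq_nonneg (z i)]
  have hzero : ∀ i ∈ Finset.univ, (hA.eigenvalues i - 1) * (z i)^2 = 0 := by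
    rw [← Finset.sum_eq_zero_iff_of_nonpos hterm]
    exact le_antisymm (Finset.sum_nonpos hterm) hsum
  have hzall : z = 0 := by
    funext i
    by_cases hi : i ∈ T
    · exact hzT i hi
    · have h0 := hzero i (Finset.mem_univ i)
      have hlt : hA.eigenvalues i < 1 := by
        by_contra h'
        exact hi (by simp [hT]; linarith)
      have : (z i)^2 = 0 := by
        rcases mul_eq_zero.mp h0 with h | h
        · linarith
        · exact h
      exact pow_eq_zero_iff (by norm_num) |>.mp this
  apply hyne
  calc y = (U * star U) *ᵥ y := by rw [hU2, Matrix.one_mulVec]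
    _ = U *ᵥ z := by rw [← Matrix.mulVec_mulVec, hz]
    _ = 0 := by rw [hzall, Matrix.mulVec_zero]

open Finset Matrix in
lemma lapEig_le_card {V : Type*} [Fintype V] [DecidableEq V] (G : SimpleGraph V) (i : V) :
    lapEig G i ≤ (Fintype.card V : ℝ) := by
  set hA := (G.posSemidef_lapMatrix (R := ℝ)).isHermitian with hAdef
  set u : V → ℝ := ⇑(hA.eigenvectorBasis i) with hu
  have hu1 : ∑ a : V, (u a)^2 = 1 := by
    have h := orthonormal_iff_ite.mp hA.eigenvectorBasis.orthonormal i i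
    simp only [if_pos rfl] at h
    rw [PiLp.inner_apply] at h
    simpa [sq] using h
  have hval : lapEig G i = u ⬝ᵥ (G.lapMatrix ℝ *ᵥ u) := by
    have h := hA.eigenvalues_eq i
    simpa [lapEig, dotProduct] using h
  have hquad : u ⬝ᵥ (G.lapMatrix ℝ *ᵥ u) =
      (∑ a : V, ∑ b : V, if G.Adj a b then (u a - u b)^2 else 0) / 2 := by
    rw [← Matrix.toLinearMap₂'_apply', SimpleGraph.lapMatrix_toLinearMap₂']
  have hle : ∑ a : V, ∑ b : V, (if G.Adj a b then (u a - u b)^2 else 0)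
      ≤ ∑ a : V, ∑ b : V, (u a - u b)^2 := by
    apply Finset.sum_le_sum; intro a _
    apply Finset.sum_le_sum; intro b _
    split_ifs with h
    · exact le_refl _
    all_goals positivity
  have hinner : ∀ a : V, ∑ b : V, (u a - u b)^2
      = (Fintype.card V : ℝ) * (u a)^2 + 1 - 2 * u a * (∑ b : V, u b) := by
    intro a
    have expand : ∀ b : V, (u a - u b)^2 = (u a)^2 + (u b)^2 - 2 * (u a * u b) := by
      intro b; ring
    rw [Finset.sum_congr rfl (fun b _ => expand b)]
    rw [Finset.sum_sub_distrib, Finset.sum_add_distrib, Finset.sum_const, hu1,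
      ← Finset.mul_sum, nsmul_eq_mul]
    rw [← Finset.mul_sum]
    simp only [Fintype.card]
    ring
  have key : ∑ a : V, ∑ b : V, (u a - u b)^2
      = 2*(Fintype.card V : ℝ) - 2*(∑ a : V, u a)^2 := by
    have hsum2 : ∑ x : V, 2 * u x * (∑ b : V, u b) = 2 * (∑ b : V, u b)^2 := by
      rw [← Finset.sum_mul, ← Finset.mul_sum]
      ring
    rw [Finset.sum_congr rfl (fun a _ => hinner a)]
    rw [Finset.sum_sub_distrib, Finset.sum_add_distrib, Finset.sum_const, ← Finset.mul_sum,
      hu1, hsum2]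
    simp only [Fintype.card, nsmul_eq_mul, mul_one]
    ring
  rw [hval, hquad]
  have hsq : 0 ≤ (∑ a : V, u a)^2 := sq_nonneg _
  rw [key] at hle
  linarith

open Finset Matrix in
lemma pendantCount_le_card_eigen {V : Type*} [Fintype V] [DecidableEq V]
    {F G : SimpleGraph V} (hFG : F ≤ G) :
    pendantCount F ≤ (Finset.univ.filter fun i => 1 ≤ lapEig G i).card := by
  classical
  set P := F.edgeFinset.filter (fun e => ∃ v ∈ e, F.degree v = 1) with hP
  set ℓ : Sym2 V → V := fun e =>
    if h : ∃ v ∈ e, F.degree v = 1 then h.choose else (Quot.out e).1 with hℓ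
  have hℓspec : ∀ e ∈ P, ℓ e ∈ e ∧ F.degree (ℓ e) = 1 := by
    intro e he
    obtain ⟨-, hex⟩ := Finset.mem_filter.mp he
    rw [show ℓ e = hex.choose from by rw [hℓ]; exact dif_pos hex]
    exact hex.choose_spec
  have hPedge : ∀ e ∈ P, e ∈ F.edgeFinset := fun e he => (Finset.mem_filter.mp he).1
  set o : Sym2 V → V := fun e =>
    if h : ∃ w, e = s(ℓ e, w) then h.choose else (Quot.out e).1 with ho
  have hospec : ∀ e ∈ P, e = s(ℓ e, o e) := by
    intro e he
    have hmem : ∃ w, e = s(ℓ e, w) := Sym2.mem_iff_exists.mp (hℓspec e he).1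
    rw [ho]
    simp only [dif_pos hmem]
    exact hmem.choose_spec
  have hadj : ∀ e ∈ P, F.Adj (ℓ e) (o e) := by
    intro e he
    have := hPedge e he
    rw [SimpleGraph.mem_edgeFinset, hospec e he, SimpleGraph.mem_edgeSet] at this
    exact this
  have hinj : Set.InjOn ℓ P := by
    intro e he e' he' heq
    exact edge_eq_of_degree_one (hℓspec e he).2 (hPedge e he) (hℓspec e he).1
      (hPedge e' he') (heq ▸ (hℓspec e' he').1)
  set S := P.image ℓ with hS
  have hScard : S.card = P.card := Finset.card_image_of_injOn hinj
  have hoS : ∀ e ∈ P, o e ∉ S := by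
    intro e he hmem
    obtain ⟨e', he', heq⟩ := Finset.mem_image.mp hmem
    have hdeg : F.degree (o e) = 1 := heq ▸ (hℓspec e' he').2
    have hoe : o e ∈ e := by
      have h := hospec e he
      generalize hx : o e = x at h ⊢
      rw [h]
      exact Sym2.mem_mk_right _ _
    have hoe' : o e ∈ e' := heq ▸ (hℓspec e' he').1
    have hee : e = e' := edge_eq_of_degree_one hdeg (hPedge e he) hoe (hPedge e' he') hoe'
    exact (hadj e he).ne ((congrArg ℓ hee).trans heq)
  -- main quadratic form estimate
  have hmain : ∀ y : V → ℝ, (∀ v ∉ S, y v = 0) → y ⬝ᵥ y ≤ y ⬝ᵥ (G.lapMatrix ℝ *ᵥ y) := by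
    intro y hy
    have hyy : y ⬝ᵥ y = ∑ e ∈ P, (y (ℓ e))^2 := by
      have h1 : y ⬝ᵥ y = ∑ v : V, (y v)^2 := by simp [dotProduct, sq]
      have h2 : ∑ v : V, (y v)^2 = ∑ v ∈ S, (y v)^2 :=
        (Finset.sum_subset (Finset.subset_univ S) (fun v _ hv => by rw [hy v hv]; ring)).symm
      rw [h1, h2, hS, Finset.sum_image (fun e he e' he' h => hinj he he' h)]
    have hquad : y ⬝ᵥ (G.lapMatrix ℝ *ᵥ y) =
        (∑ a : V, ∑ b : V, if G.Adj a b then (y a - y b)^2 else 0) / 2 := by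
      rw [← Matrix.toLinearMap₂'_apply', SimpleGraph.lapMatrix_toLinearMap₂']
    set f : V × V → ℝ := fun p => if G.Adj p.1 p.2 then (y p.1 - y p.2)^2 else 0 with hf
    have hfnn : ∀ p : V × V, 0 ≤ f p := by
      intro p; rw [hf]; dsimp only; split_ifs
      · positivity
      · exact le_refl 0
    have hGadj : ∀ e ∈ P, G.Adj (ℓ e) (o e) := fun e he => hFG (hadj e he)
    have hdisj : Disjoint (P.image fun e => (ℓ e, o e)) (P.image fun e => (o e, ℓ e)) := by
      rw [Finset.disjoint_left]
      rintro p hp1 hp2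
      obtain ⟨e, he, rfl⟩ := Finset.mem_image.mp hp1
      obtain ⟨e', he', heq⟩ := Finset.mem_image.mp hp2
      have h1 : o e' = ℓ e := congrArg Prod.fst heq
      exact hoS e' he' (by rw [h1]; exact Finset.mem_image_of_mem ℓ he)
    have hT1 : ∑ p ∈ P.image (fun e => (ℓ e, o e)), f p = ∑ e ∈ P, (y (ℓ e))^2 := by
      rw [Finset.sum_image (fun e he e' he' h => hinj he he' (congrArg Prod.fst h))]
      apply Finset.sum_congr rfl
      intro e he
      rw [hf]; dsimp only
      rw [if_pos (hGadj e he), hy (o e) (hoS e he)]; ring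
    have hT2 : ∑ p ∈ P.image (fun e => (o e, ℓ e)), f p = ∑ e ∈ P, (y (ℓ e))^2 := by
      rw [Finset.sum_image (fun e he e' he' h => hinj he he' (congrArg Prod.snd h))]
      apply Finset.sum_congr rfl
      intro e he
      rw [hf]; dsimp only
      rw [if_pos (hGadj e he).symm, hy (o e) (hoS e he)]; ring
    have hsub : (P.image (fun e => (ℓ e, o e))) ∪ (P.image (fun e => (o e, ℓ e)))
        ⊆ Finset.univ ×ˢ Finset.univ := by
      intro p _; simp [Finset.mem_product]
    have hbig : ∑ e ∈ P, (y (ℓ e))^2 + ∑ e ∈ P, (y (ℓ e))^2 ≤ ∑ p ∈ Finset.univ ×ˢ Finset.univ, f p := by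
      have h := Finset.sum_le_sum_of_subset_of_nonneg hsub (fun p _ _ => hfnn p)
      rw [Finset.sum_union hdisj, hT1, hT2] at h
      exact h
    have hprod : ∑ a : V, ∑ b : V, (if G.Adj a b then (y a - y b)^2 else 0)
        = ∑ p ∈ Finset.univ ×ˢ Finset.univ, f p := by
      rw [Finset.sum_product]
    rw [hyy, hquad, hprod]
    linarith [hbig]
  have := card_le_card_one_le_eigen (G.lapMatrix ℝ)
    (G.posSemidef_lapMatrix (R := ℝ)).isHermitian S hmain
  have hpc : pendantCount F = P.card := rfl
  rw [hpc, ← hScard]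
  exact this

/-- For any graph $G$, $\varepsilon(G) \le m_G[1,n]$. -/
theorem eps_le_mCount_Icc_one_n {n : ℕ} (G : SimpleGraph (Fin n)) :
    eps G ≤ mCount G (fun x => 1 ≤ x ∧ x ≤ (n : ℝ)) := by
  have hle : ∀ i, lapEig G i ≤ (n : ℝ) := by
    intro i
    simpa using lapEig_le_card G i
  have hmc : mCount G (fun x => 1 ≤ x ∧ x ≤ (n : ℝ))
      = (Finset.univ.filter fun i => 1 ≤ lapEig G i).card := by
    unfold mCount
    congr 1
    ext i
    simp only [Finset.mem_filter, Finset.mem_univ, true_and]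
    exact ⟨fun h => h.1, fun h => ⟨h, hle i⟩⟩
  rw [hmc]
  rcases Set.eq_empty_or_nonempty
    {k | ∃ F : SimpleGraph (Fin n), F ≤ G ∧ F.IsAcyclic ∧ pendantCount F = k} with h | h
  · rw [eps, h, csSup_empty]
    exact Nat.zero_le _
  · apply csSup_le h
    rintro k ⟨F, hFG, -, rfl⟩
    exact pendantCount_le_card_eigen hFG
end
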